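/- Let P⃗₃ be the directed path on vertices {1,2,3} with arcs (1,2) and (2,3), and let P⃗₄ be the directed path on vertices {1,2,3,4} with arcs (1,2), (2,3) and (3,4). Let D be any finite digraph, and let D' be obtained from D by adding, for each vertex v of D, a disjoint new copy P₄^v of P⃗₄ together with all arcs (v,u) for u a vertex of P₄^v. Then D admits a P⃗₃-free 2-coloring if and only if D' admits a P⃗₄-free 2-coloring. Moreover, D' is acyclic if and only if D is acyclic. -/

import Mathlib

/-- A simple digraph on vertex type `V`: no loops and no anti-parallel arcs. -/
structure Digraph' (V : Type*) : Type _ where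
  Adj : V → V → Prop
  loopless : ∀ v, ¬ Adj v v
  asymm : ∀ u v, Adj u v → ¬ Adj v u

/-- An induced copy of the digraph `F` in the digraph `D`, given by the embedding `φ`. -/
def IsInducedCopy {α β : Type*} (F : Digraph' α) (D : Digraph' β) (φ : α → β) : Prop :=
  Function.Injective φ ∧ ∀ u v : α, D.Adj (φ u) (φ v) ↔ F.Adj u v

/-- The image of `φ` is monochromatic under the coloring `c`. -/
def Monochromatic {α β : Type*} {k : ℕ} (c : β → Fin k) (φ : α → β) : Prop :=
  ∃ i : Fin k, ∀ u : α, c (φ u) = i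

/-- The coloring `c` of `D` is `F`-free: no induced copy of `F` in `D` is monochromatic. -/
def IsFFreeColoring {α β : Type*} (F : Digraph' α) (D : Digraph' β) {k : ℕ}
    (c : β → Fin k) : Prop :=
  ∀ φ : α → β, IsInducedCopy F D φ → ¬ Monochromatic c φ

/-- A digraph is acyclic if it contains no directed cycle. -/
def Digraph'.Acyclic {β : Type*} (D : Digraph' β) : Prop :=
  ∀ v : β, ¬ Relation.TransGen D.Adj v v

/-- The underlying simple graph of a digraph. -/
def Digraph'.underlying {V : Type*} (D : Digraph' V) : SimpleGraph V where
  Adj u v := D.Adj u v ∨ D.Adj v u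
  symm := ⟨fun _ _ h => Or.symm h⟩
  loopless := ⟨fun v h => h.elim (D.loopless v) (D.loopless v)⟩

/-- The directed path on three vertices `0, 1, 2` with arcs `(0, 1)` and `(1, 2)`
(vertices `1,2,3` of the statement are `0,1,2` here). -/
def P3dir : Digraph' (Fin 3) where
  Adj u v := (u = 0 ∧ v = 1) ∨ (u = 1 ∧ v = 2)
  loopless := by decide
  asymm := by decide

/-- The directed path on four vertices `0, 1, 2, 3` with arcs `(0, 1)`, `(1, 2)` and
`(2, 3)` (vertices `1,2,3,4` of the statement are `0,1,2,3` here). -/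
def P4dir : Digraph' (Fin 4) where
  Adj u v := (u = 0 ∧ v = 1) ∨ (u = 1 ∧ v = 2) ∨ (u = 2 ∧ v = 3)
  loopless := by decide
  asymm := by decide

/-- The arc relation of the digraph `D'` obtained from `D` by adding, for each vertex `v` of
`D`, a disjoint copy of `O` together with all arcs `(v, u)` for `u` a vertex of that copy. -/
def attachPlusRel {V ω : Type*} (D : Digraph' V) (O : Digraph' ω) :
    (V ⊕ (V × ω)) → (V ⊕ (V × ω)) → Prop
  | Sum.inl u, Sum.inl v => D.Adj u v
  | Sum.inl v, Sum.inr (w, _) => v = w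
  | Sum.inr _, Sum.inl _ => False
  | Sum.inr (v, u), Sum.inr (v', u') => v = v' ∧ O.Adj u u'

/-!
Arcs leave a gadget only into the same gadget, and enter it only from its owner. Hence an induced
`P⃗₄` of `D'` either lies inside one gadget or begins with an induced `P⃗₃` of `D`, so colouring
every gadget alternately turns a `P⃗₃`-free colouring of `D` into a `P⃗₄`-free one. Conversely,
the gadget at the end of a monochromatic induced `P⃗₃` of `D` is not monochromatic, so it has a
vertex of the same colour, which extends the `P⃗₃` to an induced `P⃗₄`. For acyclicity, sending a
gadget vertex to its position in `P⃗₄` maps `D'` into the lexicographic sum of `D` and `P⃗₄`.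
-/

open Relation

instance : DecidableRel P3dir.Adj := fun u v =>
  inferInstanceAs (Decidable ((u = 0 ∧ v = 1) ∨ (u = 1 ∧ v = 2)))

instance : DecidableRel P4dir.Adj := fun u v =>
  inferInstanceAs (Decidable ((u = 0 ∧ v = 1) ∨ (u = 1 ∧ v = 2) ∨ (u = 2 ∧ v = 3)))

theorem not_transGen_self_of_map {α β : Type*} {r : α → α → Prop} {s : β → β → Prop}
    (f : α → β) (hf : ∀ a b, r a b → s (f a) (f b)) (hs : ∀ b, ¬ TransGen s b b) (a : α) :
    ¬ TransGen r a a :=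
  fun h => hs (f a) (h.lift f hf)

theorem not_transGen_sumLex_self {α β : Type*} {r : α → α → Prop} {s : β → β → Prop}
    (hr : ∀ a, ¬ TransGen r a a) (hs : ∀ b, ¬ TransGen s b b) (x : α ⊕ β) :
    ¬ TransGen (Sum.Lex (TransGen r) (TransGen s)) x x := by
  rw [transGen_eq_self]
  cases x with
  | inl a => simpa using hr a
  | inr b => simpa using hs b

theorem P4dir_adj_lt : ∀ u v : Fin 4, P4dir.Adj u v → u < v := by decide

theorem P4dir_acyclic : P4dir.Acyclic :=
  not_transGen_self_of_map id P4dir_adj_lt fun b => by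
    rw [transGen_eq_self]
    exact lt_irrefl b

theorem P4dir_adj_castSucc_iff :
    ∀ u v : Fin 3, P4dir.Adj u.castSucc v.castSucc ↔ P3dir.Adj u v := by
  decide

theorem P4dir_adj_castSucc_last_iff : ∀ u : Fin 3, P4dir.Adj u.castSucc (Fin.last 3) ↔ u = 2 := by
  decide

theorem P4dir_not_adj_last : ∀ v : Fin 4, ¬ P4dir.Adj (Fin.last 3) v := by decide

theorem P4dir_adj_castSucc_succ : ∀ k : Fin 3, P4dir.Adj k.castSucc k.succ := by decide

theorem isInducedCopy_castSucc : IsInducedCopy P3dir P4dir Fin.castSucc :=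
  ⟨Fin.castSucc_injective 3, P4dir_adj_castSucc_iff⟩

theorem IsInducedCopy.comp {α β γ : Type*} {F : Digraph' α} {D : Digraph' β} {G : Digraph' γ}
    {φ : α → β} {e : γ → α} (hφ : IsInducedCopy F D φ) (he : IsInducedCopy G F e) :
    IsInducedCopy G D (φ ∘ e) :=
  ⟨hφ.1.comp he.1, fun u v => (hφ.2 _ _).trans (he.2 u v)⟩

theorem not_monochromatic_alternating {a : Fin 4 → Fin 4} (ha : Function.Injective a) :
    ¬ Monochromatic ![(0 : Fin 2), 1, 0, 1] a := by
  rintro ⟨i, hi⟩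
  obtain ⟨k₀, hk₀⟩ := Finite.injective_iff_surjective.1 ha 0
  obtain ⟨k₁, hk₁⟩ := Finite.injective_iff_surjective.1 ha 1
  have h₀ := hi k₀
  have h₁ := hi k₁
  rw [hk₀] at h₀
  rw [hk₁] at h₁
  exact absurd (h₀.trans h₁.symm) (by decide)

theorem exists_apply_eq_of_not_monochromatic {α β : Type*} {c : β → Fin 2} {φ : α → β}
    (h : ¬ Monochromatic c φ) (i : Fin 2) : ∃ u, c (φ u) = i := by
  have hother : ∀ x : Fin 2, x ≠ i → x = i + 1 := by
    revert i
    decide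
  by_contra! hne
  exact h ⟨i + 1, fun u => hother _ (hne u)⟩

section Attach

variable {V ω : Type*} {D : Digraph' V} {O : Digraph' ω} {D' : Digraph' (V ⊕ (V × ω))}
  (hD' : ∀ x y, D'.Adj x y ↔ attachPlusRel D O x y)
include hD'

theorem acyclic_attach_iff (hO : O.Acyclic) : D'.Acyclic ↔ D.Acyclic := by
  refine ⟨fun h => not_transGen_self_of_map Sum.inl (fun a b hab => (hD' _ _).2 hab) h,
    fun h => not_transGen_self_of_map (Sum.map id Prod.snd) ?_ (not_transGen_sumLex_self h hO)⟩
  intro x y hxy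
  rw [hD'] at hxy
  rcases x with a | ⟨v, a⟩ <;> rcases y with b | ⟨w, b⟩
  · exact Sum.Lex.inl (.single hxy)
  · exact Sum.Lex.sep _ _
  · exact hxy.elim
  · exact Sum.Lex.inr (.single hxy.2)

theorem isInducedCopy_gadget (v : V) : IsInducedCopy O D' fun a => Sum.inr (v, a) :=
  ⟨fun a b h => by simpa using h, fun a b => (hD' _ _).trans (and_iff_right rfl)⟩

theorem IsInducedCopy.of_inl_comp {α : Type*} {F : Digraph' α} {ψ : α → V}
    (hψ : IsInducedCopy F D' (Sum.inl ∘ ψ)) : IsInducedCopy F D ψ :=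
  ⟨hψ.1.of_comp, fun u v => (hD' _ _).symm.trans (hψ.2 u v)⟩

theorem exists_eq_inr_of_adj_inr {v : V} {a : ω} {y : V ⊕ (V × ω)}
    (h : D'.Adj (Sum.inr (v, a)) y) : ∃ b, y = Sum.inr (v, b) := by
  rw [hD'] at h
  rcases y with _ | ⟨w, b⟩
  · exact h.elim
  · exact ⟨b, by rw [h.1]⟩

variable {α : Type*} {F : Digraph' α} {φ : α → V ⊕ (V × ω)}

/-- An induced path `i → j → k` cannot step from `D` into a gadget at `j`: the owner of the
gadget would also dominate `φ k`. -/
theorem IsInducedCopy.exists_eq_inl_of_adj {i j k : α} (hφ : IsInducedCopy F D' φ)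
    (hij : F.Adj i j) (hjk : F.Adj j k) (hik : ¬ F.Adj i k) {w : V} (hi : φ i = Sum.inl w) :
    ∃ v, φ j = Sum.inl v := by
  rcases hj : φ j with v | ⟨v, a⟩
  · exact ⟨v, rfl⟩
  have hwv : w = v := by
    have h := (hD' _ _).1 ((hφ.2 i j).2 hij)
    rw [hi, hj] at h
    exact h
  obtain ⟨b, hk⟩ := exists_eq_inr_of_adj_inr hD' (hj ▸ (hφ.2 j k).2 hjk)
  refine absurd ((hφ.2 i k).1 ?_) hik
  rw [hD', hi, hk]
  exact hwv

theorem IsInducedCopy.forall_eq_inr {φ : Fin 4 → V ⊕ (V × ω)} (hφ : IsInducedCopy P4dir D' φ)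
    {v : V} {a : ω} (h₀ : φ 0 = Sum.inr (v, a)) : ∀ k, ∃ b, φ k = Sum.inr (v, b) := by
  intro k
  induction k using Fin.induction with
  | zero => exact ⟨a, h₀⟩
  | succ k ih =>
    obtain ⟨b, hb⟩ := ih
    exact exists_eq_inr_of_adj_inr hD' (hb ▸ (hφ.2 _ _).2 (P4dir_adj_castSucc_succ k))

theorem isInducedCopy_snoc_gadget {ψ : Fin 3 → V} (hψ : IsInducedCopy P3dir D ψ) (u : ω) :
    IsInducedCopy P4dir D' (Fin.snoc (Sum.inl ∘ ψ) (Sum.inr (ψ 2, u)) : Fin 4 → V ⊕ (V × ω)) := by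
  refine ⟨Fin.snoc_injective_of_injective (Sum.inl_injective.comp hψ.1) (by simp), fun x y => ?_⟩
  rw [hD']
  induction x using Fin.lastCases with
  | cast a =>
    induction y using Fin.lastCases with
    | cast b =>
      simp only [Fin.snoc_castSucc, Function.comp_apply, attachPlusRel, P4dir_adj_castSucc_iff]
      exact hψ.2 a b
    | last =>
      simp only [Fin.snoc_castSucc, Fin.snoc_last, Function.comp_apply, attachPlusRel,
        P4dir_adj_castSucc_last_iff]
      exact hψ.1.eq_iff
  | last =>
    induction y using Fin.lastCases with
    | cast b =>
      simp only [Fin.snoc_castSucc, Fin.snoc_last, Function.comp_apply, attachPlusRel]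
      exact iff_of_false id (P4dir_not_adj_last _)
    | last =>
      simp only [Fin.snoc_last, attachPlusRel]
      exact iff_of_false (fun h => O.loopless u h.2) (P4dir.loopless _)

end Attach

section AttachP4

variable {V : Type*} {D : Digraph' V} {D' : Digraph' (V ⊕ (V × Fin 4))}
  (hD' : ∀ x y, D'.Adj x y ↔ attachPlusRel D P4dir x y)
include hD'

theorem isFFreeColoring_attach {c : V → Fin 2} (hc : IsFFreeColoring P3dir D c) :
    IsFFreeColoring P4dir D' (Sum.elim c fun p => ![0, 1, 0, 1] p.2) := by
  rintro φ hφ ⟨i, hi⟩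
  rcases h₀ : φ 0 with v₀ | ⟨v, a₀⟩
  · obtain ⟨v₁, h₁⟩ := hφ.exists_eq_inl_of_adj hD' (i := 0) (j := 1) (k := 2)
      (by decide) (by decide) (by decide) h₀
    obtain ⟨v₂, h₂⟩ := hφ.exists_eq_inl_of_adj hD' (i := 1) (j := 2) (k := 3)
      (by decide) (by decide) (by decide) h₁
    have hψ : φ ∘ Fin.castSucc = Sum.inl ∘ ![v₀, v₁, v₂] := by
      funext k
      fin_cases k <;> assumption
    refine hc _ ((hψ ▸ hφ.comp isInducedCopy_castSucc).of_inl_comp hD') ⟨i, fun k => ?_⟩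
    have h := hi k.castSucc
    rwa [← Function.comp_apply (f := φ), hψ] at h
  · choose a ha using hφ.forall_eq_inr hD' h₀
    have ha_inj : Function.Injective a := fun k l hkl => hφ.1 (by rw [ha k, ha l, hkl])
    refine not_monochromatic_alternating ha_inj ⟨i, fun k => ?_⟩
    simpa [ha] using hi k

theorem isFFreeColoring_of_attach {c' : V ⊕ (V × Fin 4) → Fin 2}
    (hc' : IsFFreeColoring P4dir D' c') : IsFFreeColoring P3dir D (c' ∘ Sum.inl) := by
  rintro ψ hψ ⟨i, hi⟩
  obtain ⟨u, hu⟩ := exists_apply_eq_of_not_monochromatic (hc' _ (isInducedCopy_gadget hD' (ψ 2))) i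
  refine hc' _ (isInducedCopy_snoc_gadget hD' hψ u) ⟨i, Fin.lastCases ?_ fun k => ?_⟩
  · simpa only [Fin.snoc_last] using hu
  · rw [Fin.snoc_castSucc]
    exact hi k

end AttachP4

theorem statement5_general {V : Type*} (D : Digraph' V)
    (D' : Digraph' (V ⊕ (V × Fin 4)))
    (hD' : ∀ x y, D'.Adj x y ↔ attachPlusRel D P4dir x y) :
    ((∃ c : V → Fin 2, IsFFreeColoring P3dir D c) ↔
        (∃ c : (V ⊕ (V × Fin 4)) → Fin 2, IsFFreeColoring P4dir D' c)) ∧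
      (D'.Acyclic ↔ D.Acyclic) :=
  ⟨⟨fun ⟨_, hc⟩ => ⟨_, isFFreeColoring_attach hD' hc⟩,
      fun ⟨_, hc'⟩ => ⟨_, isFFreeColoring_of_attach hD' hc'⟩⟩,
    acyclic_attach_iff hD' P4dir_acyclic⟩

/-- `D` admits a `P⃗₃`-free `2`-coloring iff the digraph `D'`, obtained from `D` by attaching
to each vertex `v` a copy of `P⃗₄` dominated by `v`, admits a `P⃗₄`-free `2`-coloring;
moreover `D'` is acyclic iff `D` is. -/
theorem statement5 {V : Type*} [Fintype V] (D : Digraph' V)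
    (D' : Digraph' (V ⊕ (V × Fin 4)))
    (hD' : ∀ x y, D'.Adj x y ↔ attachPlusRel D P4dir x y) :
    ((∃ c : V → Fin 2, IsFFreeColoring P3dir D c) ↔
        (∃ c : (V ⊕ (V × Fin 4)) → Fin 2, IsFFreeColoring P4dir D' c)) ∧
      (D'.Acyclic ↔ D.Acyclic) :=
  statement5_general D D' hD'
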